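/- If a probability distribution P satisfies the global Markov property for a mixed graph G (every d-separation implies conditional independence), then P satisfies the c-component local Markov property for G with respect to any consistent topological ordering. -/
import Mathlib


/-- A mixed graph: directed edges and (symmetric) bidirected edges. -/
structure MixedGraph (V : Type) where
  dir : V → V → Prop
  bi : V → V → Prop
  bi_symm : ∀ a b, bi a b → bi b a

namespace MixedGraph

variable {V : Type}

/-- `G.anc x y` : `x` is an ancestor of `y` (directed path, possibly trivial). -/
def anc (G : MixedGraph V) : V → V → Prop := Relation.ReflTransGen G.dir

/-- Ancestors of a set (including the set itself). -/
def An (G : MixedGraph V) (S : Set V) : Set V := {v | ∃ s ∈ S, G.anc v s}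

/-- A set is ancestral if it contains all ancestors of its elements. -/
def Ancestral (G : MixedGraph V) (S : Set V) : Prop := G.An S = S

/-- Descendants of a set (including the set itself). -/
def De (G : MixedGraph V) (S : Set V) : Set V := {v | ∃ s ∈ S, G.anc s v}

/-- `Pa(C)`: `C` together with the directed parents of members of `C`. -/
def Pa (G : MixedGraph V) (C : Set V) : Set V := C ∪ {p | ∃ c ∈ C, G.dir p c}

/-- `Spo(C)`: vertices joined by a bidirected edge to some vertex of `C`. -/
def Spo (G : MixedGraph V) (C : Set V) : Set V := {y | ∃ c ∈ C, G.bi y c}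

/-- Connectivity by a path of bidirected edges lying inside `S`. -/
def biConn (G : MixedGraph V) (S : Set V) : V → V → Prop :=
  Relation.ReflTransGen (fun a b => G.bi a b ∧ a ∈ S ∧ b ∈ S)

/-- The c-component of `x` in the induced subgraph on `S`. -/
def cc (G : MixedGraph V) (S : Set V) (x : V) : Set V := {y | G.biConn S x y}

/-- The ordering on `V` is a topological ordering of the directed part of `G`. -/
def TopoOrder (G : MixedGraph V) [LinearOrder V] : Prop := ∀ a b, G.dir a b → a < b

/-- Ancestral c-component relative to `X` (w.r.t. the linear order on `V`). -/
def IsACC (G : MixedGraph V) [LinearOrder V] (X : V) (C : Set V) : Prop :=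
  ∃ S : Set V, G.Ancestral S ∧ S ⊆ {y | y ≤ X} ∧ X ∈ S ∧ G.cc S X = C

/-- `S⁺ = V^{≤X} \ De(Spo(C) \ Pa(C))`. -/
def Splus (G : MixedGraph V) [LinearOrder V] (X : V) (C : Set V) : Set V :=
  {y | y ≤ X} \ G.De (G.Spo C \ G.Pa C)

end MixedGraph

namespace MixedGraph

/-- `Reach G Z x w b` : there is a walk from `x` to `w` that is active given `Z`
(every non-collider outside `Z`, every collider an ancestor of `Z`), where `b`
records whether the final edge has an arrowhead at `w`. -/
inductive Reach {V : Type} (G : MixedGraph V) (Z : Set V) (x : V) : V → Bool → Prop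
  | initTail (w : V) : G.dir w x → Reach G Z x w false
  | initHead (w : V) : G.dir x w → Reach G Z x w true
  | initBi (w : V) : G.bi x w → Reach G Z x w true
  | stepOutNC (v w : V) (b : Bool) : Reach G Z x v b → v ∉ Z → G.dir v w → Reach G Z x w true
  | stepInNC (v w : V) : Reach G Z x v false → v ∉ Z → G.dir w v → Reach G Z x w false
  | stepInC (v w : V) : Reach G Z x v true → v ∈ G.An Z → G.dir w v → Reach G Z x w false
  | stepBiNC (v w : V) : Reach G Z x v false → v ∉ Z → G.bi v w → Reach G Z x w true
  | stepBiC (v w : V) : Reach G Z x v true → v ∈ G.An Z → G.bi v w → Reach G Z x w true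

/-- `x` and `y` are d-connected given `Z`. -/
def dConn {V : Type} (G : MixedGraph V) (Z : Set V) (x y : V) : Prop :=
  ∃ b, Reach G Z x y b

/-- Induced subgraph of `G` on a vertex set `S`. -/
def induce {V : Type} (G : MixedGraph V) (S : Set V) : MixedGraph V where
  dir a b := G.dir a b ∧ a ∈ S ∧ b ∈ S
  bi a b := G.bi a b ∧ a ∈ S ∧ b ∈ S
  bi_symm a b h := ⟨G.bi_symm a b h.1, h.2.2, h.2.1⟩

end MixedGraph

/-- Two assignments agree on a set of variables. -/
def agreeOn {V : Type} (f g : V → ℕ) (A : Set V) : Prop := ∀ v ∈ A, f v = g v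

/-- Probability of an event under a discrete distribution. -/
noncomputable def prS {V : Type} (p : PMF (V → ℕ)) (E : Set (V → ℕ)) : ENNReal :=
  ∑' g, E.indicator (fun h => p h) g

/-- Conditional independence `A ⫫ B | S` in `p`:
`P(a,s) P(b,s) = P(a,b,s) P(s)` for every assignment. -/
def CI {V : Type} (p : PMF (V → ℕ)) (A B S : Set V) : Prop :=
  ∀ f : V → ℕ,
    prS p {g | agreeOn f g (A ∪ S)} * prS p {g | agreeOn f g (B ∪ S)} =
    prS p {g | agreeOn f g (A ∪ B ∪ S)} * prS p {g | agreeOn f g S}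

/-- The global Markov property: every d-separation implies conditional independence. -/
def GMP {V : Type} (G : MixedGraph V) (p : PMF (V → ℕ)) : Prop :=
  ∀ A B S : Set V, A.Nonempty → B.Nonempty →
    Disjoint A B → Disjoint A S → Disjoint B S →
    (∀ a ∈ A, ∀ b ∈ B, ¬ G.dConn S a b) → CI p A B S

/-- The c-component local Markov property w.r.t. the ordering. -/
def CLMP {V : Type} [LinearOrder V] (G : MixedGraph V) (p : PMF (V → ℕ)) : Prop :=
  ∀ (X : V) (C : Set V), G.IsACC X C →
    CI p {X} (G.Splus X C \ G.Pa C) (G.Pa C \ {X})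

namespace MixedGraph

lemma anc_le {V : Type} [LinearOrder V] {G : MixedGraph V} (htopo : G.TopoOrder) {a b : V}
    (h : G.anc a b) : a ≤ b := by
  induction h with
  | refl => exact le_refl _
  | tail _ hd ih => exact le_trans ih (le_of_lt (htopo _ _ hd))

lemma mem_of_anc {V : Type} {G : MixedGraph V} {S : Set V} (hAnc : G.Ancestral S)
    {v s : V} (hs : s ∈ S) (h : G.anc v s) : v ∈ S := by
  have : v ∈ G.An S := ⟨s, hs, h⟩
  rwa [hAnc] at this

lemma cc_subset {V : Type} {G : MixedGraph V} {S : Set V} {X : V} (hXS : X ∈ S) :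
    G.cc S X ⊆ S := by
  intro y hy
  induction hy with
  | refl => exact hXS
  | tail _ he _ => exact he.2.2

lemma spo_cap {V : Type} {G : MixedGraph V} {S : Set V} {X : V} (hXS : X ∈ S)
    {s : V} (hs : s ∈ G.Spo (G.cc S X)) (hsS : s ∈ S) : s ∈ G.cc S X := by
  obtain ⟨c, hc, hbi⟩ := hs
  exact Relation.ReflTransGen.tail hc ⟨G.bi_symm _ _ hbi, cc_subset hXS hc, hsS⟩

lemma pa_subset {V : Type} {G : MixedGraph V} {S : Set V} {X : V} (hAnc : G.Ancestral S)
    (hXS : X ∈ S) : G.Pa (G.cc S X) ⊆ S := by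
  rintro v (hv | ⟨c, hc, hd⟩)
  · exact cc_subset hXS hv
  · exact mem_of_anc hAnc (cc_subset hXS hc) (Relation.ReflTransGen.single hd)

lemma key {V : Type} [LinearOrder V] {G : MixedGraph V} (htopo : G.TopoOrder) {S : Set V}
    {X : V} (hAnc : G.Ancestral S) (hSle : S ⊆ {y | y ≤ X}) (hXS : X ∈ S) :
    ∀ w b, Reach G (G.Pa (G.cc S X) \ {X}) X w b →
      (b = false → w ∈ G.Pa (G.cc S X)) ∧
      (b = true → X < w ∨ w ∈ G.De (G.Spo (G.cc S X) \ G.Pa (G.cc S X)) ∨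
        w ∈ G.Spo (G.cc S X) ∨ w = X) := by
  intro w b h
  have hXC : X ∈ G.cc S X := Relation.ReflTransGen.refl
  have hPaS : G.Pa (G.cc S X) ⊆ S := pa_subset hAnc hXS
  have hAnZS : ∀ v, v ∈ G.An (G.Pa (G.cc S X) \ {X}) → v ∈ S := by
    rintro v ⟨z, hz, ha⟩
    exact mem_of_anc hAnc (hPaS hz.1) ha
  have hDS : ∀ v, v ∈ G.De (G.Spo (G.cc S X) \ G.Pa (G.cc S X)) → v ∉ S := by
    rintro v ⟨s, hs, ha⟩ hvS
    exact hs.2 (Set.mem_union_left _ (spo_cap hXS hs.1 (mem_of_anc hAnc hvS ha)))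
  have hPaNZ : ∀ v, v ∈ G.Pa (G.cc S X) → v ∉ (G.Pa (G.cc S X) \ {X}) → v = X := by
    intro v hv hvz
    by_contra hne
    exact hvz ⟨hv, hne⟩
  induction h with
  | initTail w hd =>
    exact ⟨fun _ => Or.inr ⟨X, hXC, hd⟩, fun h => (nomatch h)⟩
  | initHead w hd =>
    exact ⟨fun h => (nomatch h), fun _ => Or.inl (htopo _ _ hd)⟩
  | initBi w hbi =>
    exact ⟨fun h => (nomatch h), fun _ => Or.inr (Or.inr (Or.inl ⟨X, hXC, G.bi_symm _ _ hbi⟩))⟩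
  | stepOutNC v w b hr hvZ hd ih =>
    refine ⟨fun h => (nomatch h), fun _ => ?_⟩
    cases b with
    | false =>
      have hv : v = X := hPaNZ v (ih.1 rfl) hvZ
      subst hv
      exact Or.inl (htopo _ _ hd)
    | true =>
      rcases ih.2 rfl with h1 | h2 | h3 | h4
      · exact Or.inl (lt_trans h1 (htopo _ _ hd))
      · obtain ⟨s, hs, ha⟩ := h2
        exact Or.inr (Or.inl ⟨s, hs, Relation.ReflTransGen.tail ha hd⟩)
      · by_cases hvp : v ∈ G.Pa (G.cc S X)
        · have hv : v = X := hPaNZ v hvp hvZ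
          subst hv
          exact Or.inl (htopo _ _ hd)
        · exact Or.inr (Or.inl ⟨v, ⟨h3, hvp⟩, Relation.ReflTransGen.single hd⟩)
      · subst h4
        exact Or.inl (htopo _ _ hd)
  | stepInNC v w hr hvZ hd ih =>
    have hv : v = X := hPaNZ v (ih.1 rfl) hvZ
    subst hv
    exact ⟨fun _ => Or.inr ⟨v, hXC, hd⟩, fun h => (nomatch h)⟩
  | stepInC v w hr hvAn hd ih =>
    have hvS : v ∈ S := hAnZS v hvAn
    refine ⟨fun _ => ?_, fun h => (nomatch h)⟩
    rcases ih.2 rfl with h1 | h2 | h3 | h4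
    · exact absurd (hSle hvS) (not_le_of_gt h1)
    · exact absurd hvS (hDS v h2)
    · exact Or.inr ⟨v, spo_cap hXS h3 hvS, hd⟩
    · subst h4
      exact Or.inr ⟨v, hXC, hd⟩
  | stepBiNC v w hr hvZ hbi ih =>
    have hv : v = X := hPaNZ v (ih.1 rfl) hvZ
    subst hv
    exact ⟨fun h => (nomatch h), fun _ => Or.inr (Or.inr (Or.inl ⟨v, hXC, G.bi_symm _ _ hbi⟩))⟩
  | stepBiC v w hr hvAn hbi ih =>
    have hvS : v ∈ S := hAnZS v hvAn
    refine ⟨fun h => (nomatch h), fun _ => ?_⟩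
    rcases ih.2 rfl with h1 | h2 | h3 | h4
    · exact absurd (hSle hvS) (not_le_of_gt h1)
    · exact absurd hvS (hDS v h2)
    · exact Or.inr (Or.inr (Or.inl ⟨v, spo_cap hXS h3 hvS, G.bi_symm _ _ hbi⟩))
    · subst h4
      exact Or.inr (Or.inr (Or.inl ⟨v, hXC, G.bi_symm _ _ hbi⟩))

end MixedGraph

/-- GMP implies C-LMP (w.r.t. any consistent topological ordering). -/
theorem stmt12 {V : Type} [LinearOrder V] (G : MixedGraph V) (htopo : G.TopoOrder)
    (p : PMF (V → ℕ)) (hGMP : GMP G p) : CLMP G p := by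
  intro X C hACC
  obtain ⟨S, hAnc, hSle, hXS, rfl⟩ := hACC
  have hXC : X ∈ G.cc S X := Relation.ReflTransGen.refl
  have hXPa : X ∈ G.Pa (G.cc S X) := Set.mem_union_left _ hXC
  by_cases hB : (G.Splus X (G.cc S X) \ G.Pa (G.cc S X)).Nonempty
  · refine hGMP {X} _ _ (Set.singleton_nonempty X) hB ?_ ?_ ?_ ?_
    · rw [Set.disjoint_left]
      rintro a rfl hb
      exact hb.2 hXPa
    · rw [Set.disjoint_left]
      rintro a rfl hb
      exact hb.2 rfl
    · rw [Set.disjoint_left]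
      rintro a ha hb
      exact ha.2 hb.1
    · rintro a rfl b hb ⟨bb, hr⟩
      have hk := MixedGraph.key htopo hAnc hSle hXS b bb hr
      cases bb with
      | false => exact hb.2 (hk.1 rfl)
      | true =>
        rcases hk.2 rfl with h1 | h2 | h3 | h4
        · exact absurd hb.1.1 (not_le_of_gt h1)
        · exact hb.1.2 h2
        · exact hb.1.2 ⟨b, ⟨h3, hb.2⟩, Relation.ReflTransGen.refl⟩
        · subst h4
          exact hb.2 hXPa
  · rw [Set.not_nonempty_iff_eq_empty] at hB
    intro f
    rw [hB]
    simp only [Set.union_empty, Set.empty_union]
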